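/- Let n ≥ 3 and let Z = (z₁,…,z_n), W = (w₁,…,w_n) ∈ 𝕃(n). Write z⃗₁ = (z₁,…,z₁) and w⃗₁ = (w₁,…,w₁) ∈ ℂ^n, so that Z − z⃗₁ ∈ 𝕄(n) and W − w⃗₁ ∈ 𝕄(n). The segment σ(t) = (1−t)Z + tW, t ∈ [0,1], is contained in 𝕃(n) if and only if W − w⃗₁ ∈ (ℝ^{n−1}_{Z−z⃗₁} ∪ ℂ*_{Z−z⃗₁}) ∖ {r(Z − z⃗₁) : r ∈ ℝ, r ≤ 0}. -/

import Mathlib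

open Complex

noncomputable section

/-- The set of `n`-segments in `ℂ^n`. -/
def Lset (n : ℕ) : Set (Fin n → ℂ) :=
  {Z | (¬ ∃ b : ℂ, ∀ j, Z j = b) ∧ ∃ (a b : ℂ) (X : Fin n → ℝ), ∀ j, Z j = a * (X j) + b}

/-- `𝕄(n)` (with `n = m + 3`): the `n`-segments whose first vertex is `0`. -/
def Mset (m : ℕ) : Set (Fin (m + 3) → ℂ) :=
  {Z | Z ∈ Lset (m + 3) ∧ Z 0 = 0}

/-- `ℝ^{n-1}_Z`: writing `Z = z·C` with `z ∈ ℂ*` and `C` real, `C₁ = 0`, `C ≠ 0`, this is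
`{z·X : X ∈ ℝ^n, X₁ = 0, X ≠ 0}` (independent of the choice of such `z`). -/
def Rslice (m : ℕ) (Z : Fin (m + 3) → ℂ) : Set (Fin (m + 3) → ℂ) :=
  {W | ∃ (z : ℂ) (C : Fin (m + 3) → ℝ), z ≠ 0 ∧ C 0 = 0 ∧ C ≠ 0 ∧ (∀ j, Z j = z * C j) ∧
        ∃ X : Fin (m + 3) → ℝ, X 0 = 0 ∧ X ≠ 0 ∧ ∀ j, W j = z * X j}

/-- `ℂ*_Z = {λ·Z : λ ∈ ℂ∖{0}}`. -/
def Cstar (m : ℕ) (Z : Fin (m + 3) → ℂ) : Set (Fin (m + 3) → ℂ) :=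
  {W | ∃ l : ℂ, l ≠ 0 ∧ ∀ j, W j = l * Z j}

/-- `{r·Z : r ∈ ℝ, r ≤ 0}`. -/
def negRay (m : ℕ) (Z : Fin (m + 3) → ℂ) : Set (Fin (m + 3) → ℂ) :=
  {W | ∃ r : ℝ, r ≤ 0 ∧ ∀ j, W j = (r : ℂ) * Z j}

lemma lset_shift {n : ℕ} (V : Fin n → ℂ) (c : ℂ) (h : V ∈ Lset n) :
    (fun j => V j + c) ∈ Lset n := by
  obtain ⟨h1, a, b, X, hX⟩ := h
  refine ⟨?_, a, b + c, X, fun j => by rw [show (fun j => V j + c) j = V j + c from rfl, hX j]; ring⟩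
  rintro ⟨b', hb'⟩
  exact h1 ⟨b' - c, fun j => eq_sub_of_add_eq (hb' j)⟩

lemma lset_sub_iff {n : ℕ} (V : Fin n → ℂ) (c : ℂ) :
    (fun j => V j - c) ∈ Lset n ↔ V ∈ Lset n := by
  constructor
  · intro h
    have h2 := lset_shift (fun j => V j - c) c h
    have he : (fun j => (fun j' => V j' - c) j + c) = V := by
      funext j; show V j - c + c = V j; ring
    rwa [he] at h2
  · intro h
    have h2 := lset_shift V (-c) h
    have he : (fun j => V j + -c) = (fun j => V j - c) := by
      funext j; ring
    rwa [he] at h2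

lemma mem_Lset_iff_of_zero {m : ℕ} (V : Fin (m + 3) → ℂ) (h0 : V 0 = 0) :
    V ∈ Lset (m + 3) ↔ ∃ (u : ℂ) (E : Fin (m + 3) → ℝ),
      u ≠ 0 ∧ E 0 = 0 ∧ E ≠ 0 ∧ ∀ j, V j = u * E j := by
  constructor
  · rintro ⟨h1, a, b, X, hX⟩
    have hb : b = -(a * (X 0 : ℂ)) := by
      have h := hX 0
      rw [h0] at h
      linear_combination -h
    refine ⟨a, fun j => X j - X 0, ?_, by simp, ?_, ?_⟩
    · intro ha
      exact h1 ⟨b, fun j => by rw [hX j, ha]; ring⟩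
    · intro hE
      refine h1 ⟨a * (X 0 : ℂ) + b, fun j => ?_⟩
      have hXj : X j - X 0 = 0 := congrFun hE j
      have : X j = X 0 := by linarith
      rw [hX j, this]
    · intro j
      rw [hX j, hb]
      push_cast
      ring
  · rintro ⟨u, E, hu, hE0, hE, hVE⟩
    refine ⟨?_, u, 0, E, fun j => by rw [hVE j]; ring⟩
    rintro ⟨b, hb⟩
    have hb0 : b = 0 := by rw [← hb 0, h0]
    apply hE
    funext j
    have h := hb j
    rw [hVE j, hb0] at h
    have : (E j : ℂ) = 0 := (mul_eq_zero.mp h).resolve_left hu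
    exact_mod_cast this

theorem segment_mem_Lset_iff (m : ℕ) (Z W : Fin (m + 3) → ℂ)
    (hZ : Z ∈ Lset (m + 3)) (hW : W ∈ Lset (m + 3)) :
    ((fun j => Z j - Z 0) ∈ Mset m) ∧ ((fun j => W j - W 0) ∈ Mset m) ∧
    ((∀ t ∈ Set.Icc (0 : ℝ) 1,
        (fun j => (1 - (t : ℂ)) * Z j + (t : ℂ) * W j) ∈ Lset (m + 3)) ↔
      (fun j => W j - W 0) ∈
        (Rslice m (fun j => Z j - Z 0) ∪ Cstar m (fun j => Z j - Z 0)) \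
          negRay m (fun j => Z j - Z 0)) := by
  have hZ0 : (fun j => Z j - Z 0) ∈ Lset (m + 3) := (lset_sub_iff Z (Z 0)).mpr hZ
  have hW0 : (fun j => W j - W 0) ∈ Lset (m + 3) := (lset_sub_iff W (W 0)).mpr hW
  obtain ⟨a, C, ha, hC0, hC, hZCa⟩ := (mem_Lset_iff_of_zero _ (by simp)).mp hZ0
  obtain ⟨w, D, hw, hD0, hD, hWDa⟩ := (mem_Lset_iff_of_zero _ (by simp)).mp hW0
  have hZC : ∀ j, Z j - Z 0 = a * (C j : ℂ) := hZCa
  have hWD : ∀ j, W j - W 0 = w * (D j : ℂ) := hWDa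
  have hseg : ∀ t : ℝ, ((fun j => (1 - (t : ℂ)) * Z j + (t : ℂ) * W j) ∈ Lset (m + 3) ↔
      ∃ (u : ℂ) (E : Fin (m + 3) → ℝ), u ≠ 0 ∧ E 0 = 0 ∧ E ≠ 0 ∧
        ∀ j, (1 - (t : ℂ)) * (Z j - Z 0) + (t : ℂ) * (W j - W 0) = u * E j) := by
    intro t
    rw [← lset_sub_iff _ ((1 - (t : ℂ)) * Z 0 + (t : ℂ) * W 0)]
    have he : (fun j => ((1 - (t : ℂ)) * Z j + (t : ℂ) * W j)
          - ((1 - (t : ℂ)) * Z 0 + (t : ℂ) * W 0))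
        = fun j => (1 - (t : ℂ)) * (Z j - Z 0) + (t : ℂ) * (W j - W 0) := by
      funext j; ring
    rw [he, mem_Lset_iff_of_zero _ (by simp)]
  refine ⟨⟨hZ0, by simp⟩, ⟨hW0, by simp⟩, ?_⟩
  constructor
  · intro hall
    have hnneg : (fun j => W j - W 0) ∉ negRay m (fun j => Z j - Z 0) := by
      rintro ⟨r, hr, hWra⟩
      have hWr : ∀ j, W j - W 0 = (r : ℂ) * (Z j - Z 0) := hWra
      obtain ⟨j0, hj0⟩ : ∃ j, D j ≠ 0 := Function.ne_iff.mp hD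
      have hr0 : r ≠ 0 := by
        intro h
        subst h
        have h2 := hWr j0
        rw [hWD j0] at h2
        simp at h2
        rcases h2 with h2 | h2
        · exact hw h2
        · exact hj0 (by exact_mod_cast h2)
      have hrneg : r < 0 := lt_of_le_of_ne hr hr0
      have h1r : (0 : ℝ) < 1 - r := by linarith
      set t : ℝ := 1 / (1 - r) with ht_def
      have ht : t ∈ Set.Icc (0 : ℝ) 1 := by
        constructor
        · positivity
        · rw [div_le_one h1r]; linarith
      obtain ⟨u, E, hu, hE0, hE, hVE⟩ := (hseg t).mp (hall t ht)
      have hco : (1 : ℂ) - (t : ℂ) + (t : ℂ) * (r : ℂ) = 0 := by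
        have h : (1 : ℝ) - t + t * r = 0 := by
          rw [ht_def]; field_simp; ring
        exact_mod_cast h
      apply hE
      funext j
      have h2 := hVE j
      rw [hWr j] at h2
      have h3 : u * (E j : ℂ) = 0 := by
        rw [← h2]
        linear_combination (Z j - Z 0) * hco
      have : (E j : ℂ) = 0 := (mul_eq_zero.mp h3).resolve_left hu
      show E j = 0
      exact_mod_cast this
    refine ⟨?_, hnneg⟩
    by_cases him : ((starRingEnd ℂ) a * w).im = 0
    · -- real case: Rslice
      left
      have hrew : ((((starRingEnd ℂ) a * w).re : ℝ) : ℂ) = (starRingEnd ℂ) a * w := by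
        apply Complex.ext <;> simp [him]
      have hca : (starRingEnd ℂ) a ≠ 0 := by simpa using ha
      set s : ℝ := ((starRingEnd ℂ) a * w).re / Complex.normSq a with hs_def
      have hns : Complex.normSq a ≠ 0 := by
        simpa using ha
      have hws : w = a * (s : ℂ) := by
        have hsc : (s : ℂ) = ((starRingEnd ℂ) a * w) / (Complex.normSq a : ℂ) := by
          rw [hs_def]
          push_cast
          rw [hrew]
        rw [hsc, ← Complex.mul_conj a]
        field_simp
      have hs : s ≠ 0 := by
        intro h
        rw [h] at hws
        simp at hws
        exact hw hws
      refine ⟨a, C, ha, hC0, hC, hZCa, fun j => s * D j, by simp [hD0], ?_, ?_⟩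
      · intro hX
        apply hD
        funext j
        have := congrFun hX j
        simp only [Pi.zero_apply] at this
        show D j = 0
        rcases mul_eq_zero.mp this with h | h
        · exact absurd h hs
        · exact h
      · intro j
        show W j - W 0 = a * ((s * D j : ℝ) : ℂ)
        rw [hWD j, hws]
        push_cast
        ring
    · -- non-real case: Cstar
      right
      obtain ⟨u0, E, hu0, hE0, hE, hVE⟩ := (hseg (1/2)).mp (hall (1/2) (by norm_num))
      obtain ⟨u, hu, key⟩ : ∃ u : ℂ, u ≠ 0 ∧
          ∀ j, a * (C j : ℂ) + w * (D j : ℂ) = u * (E j : ℂ) := by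
        refine ⟨2 * u0, by simpa using hu0, fun j => ?_⟩
        have h := hVE j
        rw [hZC j, hWD j] at h
        push_cast at h
        linear_combination 2 * h
      have kre : ∀ j, a.re * C j + w.re * D j = u.re * E j := by
        intro j
        have h := congrArg Complex.re (key j)
        simpa using h
      have kim : ∀ j, a.im * C j + w.im * D j = u.im * E j := by
        intro j
        have h := congrArg Complex.im (key j)
        simpa using h
      have hlin : ∀ j, (u.im * a.re - u.re * a.im) * C j
          + (u.im * w.re - u.re * w.im) * D j = 0 := by
        intro j
        linear_combination u.im * kre j - u.re * kim j
      by_cases hdel : u.im * w.re - u.re * w.im = 0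
      · exfalso
        by_cases hgam : u.im * a.re - u.re * a.im = 0
        · apply him
          have huu : u.re ≠ 0 ∨ u.im ≠ 0 := by
            by_contra h
            push_neg at h
            exact hu (Complex.ext h.1 h.2)
          have hcross : a.re * w.im - a.im * w.re = 0 := by
            rcases huu with h | h
            · have h3 : u.re * (a.re * w.im - a.im * w.re) = 0 := by
                linear_combination w.re * hgam - a.re * hdel
              exact (mul_eq_zero.mp h3).resolve_left h
            · have h3 : u.im * (a.re * w.im - a.im * w.re) = 0 := by
                linear_combination w.im * hgam - a.im * hdel
              exact (mul_eq_zero.mp h3).resolve_left h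
          simp [Complex.mul_im]
          linarith
        · -- gamma ≠ 0, delta = 0 ⇒ C = 0, contradiction
          apply hC
          funext j
          have h := hlin j
          rw [hdel] at h
          simp at h
          show C j = 0
          rcases h with h | h
          · exact absurd h hgam
          · exact h
      · -- delta ≠ 0: D = s C, Cstar
        set s : ℝ := -(u.im * a.re - u.re * a.im) / (u.im * w.re - u.re * w.im) with hsdef
        have hDs : ∀ j, D j = s * C j := by
          intro j
          have h := hlin j
          rw [hsdef]
          field_simp
          linear_combination h
        have hs : s ≠ 0 := by
          intro h
          apply hD
          funext j
          show D j = 0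
          rw [hDs j, h, zero_mul]
        refine ⟨w * (s : ℂ) / a, ?_, ?_⟩
        · apply div_ne_zero _ ha
          exact mul_ne_zero hw (by exact_mod_cast hs)
        · intro j
          show W j - W 0 = w * (s : ℂ) / a * (Z j - Z 0)
          rw [hWD j, hZC j, hDs j]
          push_cast
          field_simp
  · rintro ⟨hmem, hnneg⟩ t ht
    rw [hseg t]
    rcases hmem with hR | hCs
    · obtain ⟨z, C', hz, hC'0, hC', hZC'a, X, hX0, hX, hWXa⟩ := hR
      have hZC' : ∀ j, Z j - Z 0 = z * (C' j : ℂ) := hZC'a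
      have hWX : ∀ j, W j - W 0 = z * (X j : ℂ) := hWXa
      refine ⟨z, fun j => (1 - t) * C' j + t * X j, hz, by simp [hC'0, hX0], ?_, ?_⟩
      · intro hEz
        rcases eq_or_lt_of_le ht.1 with h0 | h0
        · apply hC'
          funext j
          have h := congrFun hEz j
          simp only [← h0] at h
          show C' j = 0
          simpa using h
        · apply hnneg
          refine ⟨-(1 - t) / t, ?_, fun j => ?_⟩
          · apply div_nonpos_of_nonpos_of_nonneg
            · linarith [ht.2]
            · exact le_of_lt h0
          · have h := congrFun hEz j
            simp only [Pi.zero_apply] at h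
            have hXj : X j = -(1 - t) / t * C' j := by
              field_simp
              linear_combination h
            show W j - W 0 = ((-(1 - t) / t : ℝ) : ℂ) * (Z j - Z 0)
            rw [hWX j, hZC' j, hXj]
            push_cast
            ring
      · intro j
        rw [hZC' j, hWX j]
        push_cast
        ring
    · obtain ⟨l, hl, hWla⟩ := hCs
      have hWl : ∀ j, W j - W 0 = l * (Z j - Z 0) := hWla
      have hc : (1 - (t : ℂ)) + (t : ℂ) * l ≠ 0 := by
        by_cases hlim : l.im = 0
        · have hlre : 0 < l.re := by
            rcases lt_trichotomy l.re 0 with h | h | h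
            · exfalso
              apply hnneg
              refine ⟨l.re, le_of_lt h, fun j => ?_⟩
              show W j - W 0 = ((l.re : ℝ) : ℂ) * (Z j - Z 0)
              rw [hWl j]
              congr 1
              exact (Complex.ext (by simp) (by simp [hlim])).symm
            · exact absurd (Complex.ext h hlim) hl
            · exact h
          intro hc0
          have h := congrArg Complex.re hc0
          simp [Complex.mul_re, hlim] at h
          have h1 : 0 ≤ t * l.re := mul_nonneg ht.1 hlre.le
          have h2 : t = 1 := by linarith [ht.2]
          rw [h2] at h
          simp at h
          linarith
        · intro hc0
          have h := congrArg Complex.im hc0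
          simp [Complex.mul_im] at h
          rcases h with h | h
          · subst h
            have h2 := congrArg Complex.re hc0
            simp at h2
          · exact hlim h
      refine ⟨((1 - (t : ℂ)) + (t : ℂ) * l) * a, C, mul_ne_zero hc ha, hC0, hC, fun j => ?_⟩
      rw [hWl j, hZC j]
      ring
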